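/- Let 0 < ε < 1 and let x = (x₁, x₂) ∈ Ω_ε. Then there exists φ ∈ BMO_ε((0,1]) with ∫₀¹ φ = x₁, ∫₀¹ φ² = x₂, and ∫₀¹ e^φ = B⁺_ε(x). In particular the supremum of ⟨e^φ⟩_I over φ ∈ BMO_ε(I) with ⟨φ⟩_I = x₁, ⟨φ²⟩_I = x₂ is at least B⁺_ε(x). -/

import Mathlib

open MeasureTheory Real

/-- The average of `φ` over the interval with endpoints `a`, `b`. -/
noncomputable def avg (φ : ℝ → ℝ) (a b : ℝ) : ℝ := (∫ t in a..b, φ t) / (b - a)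

/-- `φ ∈ BMO_ε([a,b])`: `φ` and `φ²` are integrable on `[a,b]` and the mean
oscillation `⟨φ²⟩_J − ⟨φ⟩_J²` is at most `ε²` on every nondegenerate
subinterval `J = [c,d] ⊆ [a,b]`. -/
def BMOe (ε a b : ℝ) (φ : ℝ → ℝ) : Prop :=
  IntervalIntegrable φ volume a b ∧
  IntervalIntegrable (fun t => (φ t) ^ 2) volume a b ∧
  ∀ c d : ℝ, a ≤ c → c < d → d ≤ b →
    avg (fun t => (φ t) ^ 2) c d - (avg φ c d) ^ 2 ≤ ε ^ 2
/-- The parabolic strip `Ω_ε = {x : x₁² ≤ x₂ ≤ x₁² + ε²}`. -/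
def Omega (ε : ℝ) : Set (ℝ × ℝ) := {x | x.1 ^ 2 ≤ x.2 ∧ x.2 ≤ x.1 ^ 2 + ε ^ 2}

/-- The upper Bellman function `B⁺_δ`. -/
noncomputable def Bp (δ : ℝ) (x : ℝ × ℝ) : ℝ :=
  (1 - Real.sqrt (δ ^ 2 + x.1 ^ 2 - x.2)) / (1 - δ) *
    Real.exp (x.1 + Real.sqrt (δ ^ 2 + x.1 ^ 2 - x.2) - δ)

/-- The lower Bellman function `B⁻_δ`. -/
noncomputable def Bm (δ : ℝ) (x : ℝ × ℝ) : ℝ :=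
  (1 + Real.sqrt (δ ^ 2 + x.1 ^ 2 - x.2)) / (1 + δ) *
    Real.exp (x.1 - Real.sqrt (δ ^ 2 + x.1 ^ 2 - x.2) + δ)

/-!
The extremal function is `φ t = x₁ - ε a + ε log⁺ (a / t)` with
`a = 1 - √(ε² + x₁² - x₂) / ε ∈ [0, 1]`: logarithmic on `(0, a]` and constant on `[a, 1]`.
Since `∫₀¹ log⁺ (a / t) = a` and `∫₀¹ log⁺ (a / t)² = 2a`, the two moments of `φ` are `x₁`
and `x₂`, and `∫₀¹ e^φ = e^(x₁ - ε a) (a / (1 - ε) + 1 - a)`, which is `B⁺_ε(x)`.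

For the BMO bound, the mean oscillation of `log` on `[c, d] ⊆ [0, ∞)` is
`1 - c d ((log d - log c) / (d - c))² ≤ 1`. Truncating at `0` is `1`-Lipschitz and mean
oscillation is the least mean square distance to a constant, so
`log⁺ (a / t) = max 0 (log a - log t)` has mean oscillation at most `1` as well, and `φ` at
most `ε²`.
-/

open Set
open intervalIntegral (intervalIntegrable_log' intervalIntegrable_rpow' integral_congr_uIoo
  integral_mono_on_of_le_Ioo intervalIntegrable_deriv_of_nonneg integral_eq_sub_of_hasDeriv_right
  integral_add_adjacent_intervals)

noncomputable def meanOsc (f : ℝ → ℝ) (c d : ℝ) : ℝ :=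
  avg (fun t => f t ^ 2) c d - avg f c d ^ 2

section Affine

variable {f g : ℝ → ℝ} {c d : ℝ}

lemma intervalIntegrable_sq_const_add_mul (α β : ℝ) (hf : IntervalIntegrable f volume c d)
    (hf2 : IntervalIntegrable (fun t => f t ^ 2) volume c d) :
    IntervalIntegrable (fun t => (α + β * f t) ^ 2) volume c d := by
  convert ((intervalIntegrable_const (c := α ^ 2)).add (hf.const_mul (2 * α * β))).add
    (hf2.const_mul (β ^ 2)) using 1
  ext t; ring

lemma integral_const_add_mul (α β : ℝ) (hf : IntervalIntegrable f volume c d) :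
    ∫ t in c..d, (α + β * f t) = α * (d - c) + β * ∫ t in c..d, f t := by
  rw [intervalIntegral.integral_add intervalIntegrable_const (hf.const_mul β),
    intervalIntegral.integral_const, intervalIntegral.integral_const_mul, smul_eq_mul, mul_comm]

lemma integral_sq_const_add_mul (α β : ℝ) (hf : IntervalIntegrable f volume c d)
    (hf2 : IntervalIntegrable (fun t => f t ^ 2) volume c d) :
    ∫ t in c..d, (α + β * f t) ^ 2 =
      α ^ 2 * (d - c) + 2 * α * β * (∫ t in c..d, f t) + β ^ 2 * ∫ t in c..d, f t ^ 2 := by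
  have hexp : (fun t => (α + β * f t) ^ 2) =
      fun t => (α ^ 2 + 2 * α * β * f t) + β ^ 2 * f t ^ 2 := by
    ext t; ring
  rw [hexp, intervalIntegral.integral_add (intervalIntegrable_const.add (hf.const_mul _))
    (hf2.const_mul _), integral_const_add_mul _ _ hf, intervalIntegral.integral_const_mul]

lemma meanOsc_const_add_mul (α β : ℝ) (hcd : c ≠ d) (hf : IntervalIntegrable f volume c d)
    (hf2 : IntervalIntegrable (fun t => f t ^ 2) volume c d) :
    meanOsc (fun t => α + β * f t) c d = β ^ 2 * meanOsc f c d := by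
  have hdc : d - c ≠ 0 := sub_ne_zero.mpr hcd.symm
  simp only [meanOsc, avg]
  rw [integral_const_add_mul _ _ hf, integral_sq_const_add_mul _ _ hf hf2]
  field_simp
  ring

lemma meanOsc_add_sq_eq_avg (k : ℝ) (hcd : c ≠ d) (hf : IntervalIntegrable f volume c d)
    (hf2 : IntervalIntegrable (fun t => f t ^ 2) volume c d) :
    meanOsc f c d + (avg f c d - k) ^ 2 = avg (fun t => (f t - k) ^ 2) c d := by
  have hdc : d - c ≠ 0 := sub_ne_zero.mpr hcd.symm
  have hsub : (fun t => (f t - k) ^ 2) = fun t => (-k + 1 * f t) ^ 2 := by ext t; ring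
  simp only [meanOsc, avg]
  rw [hsub, integral_sq_const_add_mul _ _ hf hf2]
  field_simp
  ring

/-- Mean oscillation is the least mean square deviation from a constant. -/
lemma meanOsc_le_of_abs_sub_le (k : ℝ) (hcd : c < d)
    (hf : IntervalIntegrable f volume c d) (hf2 : IntervalIntegrable (fun t => f t ^ 2) volume c d)
    (hg : IntervalIntegrable g volume c d) (hg2 : IntervalIntegrable (fun t => g t ^ 2) volume c d)
    (h : ∀ t ∈ Ioo c d, |g t - k| ≤ |f t - avg f c d|) :
    meanOsc g c d ≤ meanOsc f c d := by
  have hsq {φ : ℝ → ℝ} (m : ℝ) (hφ : IntervalIntegrable φ volume c d)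
      (hφ2 : IntervalIntegrable (fun t => φ t ^ 2) volume c d) :
      IntervalIntegrable (fun t => (φ t - m) ^ 2) volume c d := by
    simpa [sub_eq_neg_add] using intervalIntegrable_sq_const_add_mul (-m) 1 hφ hφ2
  calc meanOsc g c d ≤ meanOsc g c d + (avg g c d - k) ^ 2 := le_add_of_nonneg_right (sq_nonneg _)
    _ = avg (fun t => (g t - k) ^ 2) c d := meanOsc_add_sq_eq_avg k hcd.ne hg hg2
    _ ≤ avg (fun t => (f t - avg f c d) ^ 2) c d := by
        refine div_le_div_of_nonneg_right ?_ (sub_pos.mpr hcd).le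
        exact integral_mono_on_of_le_Ioo hcd.le (hsq k hg hg2) (hsq _ hf hf2)
          fun t ht => sq_le_sq.mpr (h t ht)
    _ = meanOsc f c d := by rw [← meanOsc_add_sq_eq_avg _ hcd.ne hf hf2, sub_self]; ring

end Affine

section Log

variable {c d : ℝ}

lemma hasDerivAt_log_sq_primitive {t : ℝ} (ht : t ≠ 0) :
    HasDerivAt (fun s => s * ((log s - 1) ^ 2 + 1)) (log t ^ 2) t := by
  refine ((hasDerivAt_id t).mul
    ((((hasDerivAt_log ht).sub_const 1).pow 2).add_const 1)).congr_deriv ?_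
  simp only [id, Pi.pow_apply]
  field_simp
  ring

/-- Near `0` write `s (log s - 1)² = (2 √s log √s - √s)²`, which is continuous. -/
lemma continuousOn_log_sq_primitive :
    ContinuousOn (fun s => s * ((log s - 1) ^ 2 + 1)) (Ici 0) := by
  have hcont : Continuous fun s => (2 * (√s * log √s) - √s) ^ 2 + s := by
    have := continuous_mul_log.comp continuous_sqrt
    fun_prop
  refine hcont.continuousOn.congr fun s hs => ?_
  have hs : 0 ≤ s := hs
  simp only [log_sqrt hs]
  linear_combination (-(log s - 1) ^ 2) * sq_sqrt hs

lemma intervalIntegrable_log_sq (hc : 0 ≤ c) (hd : 0 ≤ d) :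
    IntervalIntegrable (fun t => log t ^ 2) volume c d := by
  have hsub : uIcc c d ⊆ Ici 0 := fun t ht => le_trans (le_min hc hd) ht.1
  refine intervalIntegrable_deriv_of_nonneg (continuousOn_log_sq_primitive.mono hsub)
    (fun t ht => hasDerivAt_log_sq_primitive ?_) fun t _ => sq_nonneg _
  exact (lt_of_le_of_lt (le_min hc hd) ht.1).ne'

lemma integral_log_sq (hc : 0 ≤ c) (hd : 0 ≤ d) :
    ∫ t in c..d, log t ^ 2 = d * ((log d - 1) ^ 2 + 1) - c * ((log c - 1) ^ 2 + 1) := by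
  have hsub : uIcc c d ⊆ Ici 0 := fun t ht => le_trans (le_min hc hd) ht.1
  refine integral_eq_sub_of_hasDeriv_right
    (continuousOn_log_sq_primitive.mono hsub) (fun t ht => ?_) (intervalIntegrable_log_sq hc hd)
  exact (hasDerivAt_log_sq_primitive (lt_of_le_of_lt (le_min hc hd) ht.1).ne').hasDerivWithinAt

lemma meanOsc_log (hc : 0 ≤ c) (hd : 0 ≤ d) (hcd : c ≠ d) :
    meanOsc log c d = 1 - c * d * ((log d - log c) / (d - c)) ^ 2 := by
  have hdc : d - c ≠ 0 := sub_ne_zero.mpr hcd.symm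
  simp only [meanOsc, avg]
  rw [integral_log, integral_log_sq hc hd]
  field_simp
  ring

lemma meanOsc_log_le_one (hc : 0 ≤ c) (hd : 0 ≤ d) (hcd : c ≠ d) : meanOsc log c d ≤ 1 := by
  rw [meanOsc_log hc hd hcd]
  have := mul_nonneg hc hd
  nlinarith [sq_nonneg ((log d - log c) / (d - c))]

end Log

section PosLog

variable {a b c d t : ℝ}

lemma posLog_div_eq_log_sub (ht : 0 < t) (hta : t ≤ a) : log⁺ (a / t) = log a - log t := by
  have h1 : 1 ≤ |a / t| := by
    rw [abs_of_pos (div_pos (ht.trans_le hta) ht)]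
    exact (one_le_div ht).mpr hta
  rw [posLog_eq_log h1, log_div (ht.trans_le hta).ne' ht.ne']

lemma posLog_div_eq_zero (ha : 0 ≤ a) (hat : a ≤ t) : log⁺ (a / t) = 0 := by
  rw [posLog_eq_zero_iff, abs_of_nonneg (div_nonneg ha (ha.trans hat))]
  exact div_le_one_of_le₀ hat (ha.trans hat)

lemma posLog_div_le (a t : ℝ) : log⁺ (a / t) ≤ log⁺ a + |log t| := by
  calc log⁺ (a / t) ≤ log⁺ a + log⁺ t⁻¹ := div_eq_mul_inv a t ▸ posLog_mul
    _ ≤ log⁺ a + |log t| := by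
        gcongr
        rw [posLog_apply, log_inv]
        exact max_le (abs_nonneg _) (neg_le_abs _)

lemma intervalIntegrable_posLog_div (a c d : ℝ) :
    IntervalIntegrable (fun t => log⁺ (a / t)) volume c d := by
  refine ((intervalIntegrable_const (c := log⁺ a)).add intervalIntegrable_log'.abs).mono_fun'
    (by fun_prop) (ae_of_all _ fun t => ?_)
  simp only [norm_of_nonneg posLog_nonneg]
  exact posLog_div_le a t

lemma intervalIntegrable_posLog_div_sq (a : ℝ) (hc : 0 ≤ c) (hd : 0 ≤ d) :
    IntervalIntegrable (fun t => log⁺ (a / t) ^ 2) volume c d := by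
  have hbound := intervalIntegrable_sq_const_add_mul (log⁺ a) 1 intervalIntegrable_log'.abs
    (by simpa only [sq_abs] using intervalIntegrable_log_sq hc hd)
  refine hbound.mono_fun' (by fun_prop) (ae_of_all _ fun t => ?_)
  simp only [norm_of_nonneg (sq_nonneg _), one_mul]
  exact pow_le_pow_left₀ posLog_nonneg (posLog_div_le a t) 2

lemma meanOsc_posLog_div_le_one (a : ℝ) (hc : 0 ≤ c) (hcd : c < d) :
    meanOsc (fun t => log⁺ (a / t)) c d ≤ 1 := by
  rcases eq_or_ne a 0 with rfl | ha
  · simp [meanOsc, avg]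
  have hd : 0 ≤ d := hc.trans hcd.le
  have hlog2 := intervalIntegrable_log_sq hc hd
  set f : ℝ → ℝ := fun t => log a + (-1) * log t with hf_def
  have hf : IntervalIntegrable f volume c d :=
    intervalIntegrable_const.add (intervalIntegrable_log'.const_mul _)
  have hf2 := intervalIntegrable_sq_const_add_mul (log a) (-1) intervalIntegrable_log' hlog2
  calc meanOsc (fun t => log⁺ (a / t)) c d ≤ meanOsc f c d := by
        refine meanOsc_le_of_abs_sub_le (max 0 (avg f c d)) hcd hf hf2
          (intervalIntegrable_posLog_div a c d) (intervalIntegrable_posLog_div_sq a hc hd)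
          fun t ht => ?_
        have hlog : log (a / t) = f t := by
          rw [log_div ha (hc.trans_lt ht.1).ne', hf_def]; ring
        rw [posLog_apply, hlog, max_comm 0, max_comm 0]
        exact abs_max_sub_max_le_abs (f t) (avg f c d) 0
    _ = meanOsc log c d := by
        rw [hf_def, meanOsc_const_add_mul _ _ hcd.ne intervalIntegrable_log' hlog2]; ring
    _ ≤ 1 := meanOsc_log_le_one hc hd hcd.ne

lemma intervalIntegrable_comp_posLog_div (G : ℝ → ℝ) (ha : 0 ≤ a) (hab : a ≤ b)
    (hG : IntervalIntegrable (fun t => G (log a - log t)) volume 0 a) :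
    IntervalIntegrable (fun t => G (log⁺ (a / t))) volume 0 b := by
  refine (hG.congr_uIoo fun t ht => ?_).trans
    ((intervalIntegrable_const (c := G 0)).congr_uIoo fun t ht => ?_)
  · rw [uIoo_of_le ha] at ht
    simp only [posLog_div_eq_log_sub ht.1 ht.2.le]
  · rw [uIoo_of_le hab] at ht
    simp only [posLog_div_eq_zero ha ht.1.le]

lemma integral_comp_posLog_div (G : ℝ → ℝ) (ha : 0 ≤ a) (hab : a ≤ b)
    (hG : IntervalIntegrable (fun t => G (log a - log t)) volume 0 a) :
    ∫ t in 0..b, G (log⁺ (a / t)) = (∫ t in 0..a, G (log a - log t)) + (b - a) * G 0 := by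
  have h₁ : EqOn (fun t => G (log a - log t)) (fun t => G (log⁺ (a / t))) (uIoo 0 a) :=
    fun t ht => by
      rw [uIoo_of_le ha] at ht
      simp only [posLog_div_eq_log_sub ht.1 ht.2.le]
  have h₂ : EqOn (fun _ => G 0) (fun t => G (log⁺ (a / t))) (uIoo a b) := fun t ht => by
    rw [uIoo_of_le hab] at ht
    simp only [posLog_div_eq_zero ha ht.1.le]
  rw [← integral_add_adjacent_intervals (hG.congr_uIoo h₁)
      (intervalIntegrable_const.congr_uIoo h₂),
    ← integral_congr_uIoo h₁, ← integral_congr_uIoo h₂,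
    intervalIntegral.integral_const, smul_eq_mul]

end PosLog

section Integrals

variable {a b ε : ℝ}

lemma integral_posLog_div (ha : 0 ≤ a) (hab : a ≤ b) : ∫ t in 0..b, log⁺ (a / t) = a := by
  have hint : IntervalIntegrable (fun t => log a - log t) volume 0 a :=
    intervalIntegrable_const.sub intervalIntegrable_log'
  rw [integral_comp_posLog_div (fun s => s) ha hab hint,
    intervalIntegral.integral_sub intervalIntegrable_const intervalIntegrable_log', integral_log]
  simp

lemma integral_posLog_div_sq (ha : 0 ≤ a) (hab : a ≤ b) :
    ∫ t in 0..b, log⁺ (a / t) ^ 2 = 2 * a := by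
  have hsq : (fun t => (log a - log t) ^ 2) = fun t => (log a + (-1) * log t) ^ 2 := by
    ext t; ring
  have hlog2 := intervalIntegrable_log_sq le_rfl ha
  have hint := intervalIntegrable_sq_const_add_mul (log a) (-1)
    intervalIntegrable_log' hlog2
  rw [integral_comp_posLog_div (· ^ 2) ha hab (hsq ▸ hint), hsq,
    integral_sq_const_add_mul _ _ intervalIntegrable_log' hlog2, integral_log,
    integral_log_sq le_rfl ha]
  simp only [log_zero]
  ring

lemma exp_mul_log_sub_eq_rpow {t : ℝ} (ha : 0 < a) (ht : 0 < t) :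
    exp (ε * (log a - log t)) = a ^ ε * t ^ (-ε) := by
  rw [rpow_def_of_pos ha, rpow_def_of_pos ht, ← exp_add]
  ring_nf

lemma intervalIntegrable_exp_mul_log_sub (hε : ε < 1) (ha : 0 ≤ a) :
    IntervalIntegrable (fun t => exp (ε * (log a - log t))) volume 0 a := by
  rcases ha.eq_or_lt with rfl | ha
  · exact .refl
  refine ((intervalIntegrable_rpow' (by linarith : -1 < -ε)).const_mul (a ^ ε)).congr_uIoo
    fun t ht => ?_
  rw [uIoo_of_le ha.le] at ht
  exact (exp_mul_log_sub_eq_rpow ha ht.1).symm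

lemma integral_exp_mul_log_sub (hε : ε < 1) (ha : 0 ≤ a) :
    ∫ t in 0..a, exp (ε * (log a - log t)) = a / (1 - ε) := by
  rcases ha.eq_or_lt with rfl | ha
  · simp
  have h1ε : 1 - ε ≠ 0 := by linarith
  rw [integral_congr_uIoo (g := fun t => a ^ ε * t ^ (-ε)) fun t ht => by
      rw [uIoo_of_le ha.le] at ht
      exact exp_mul_log_sub_eq_rpow ha ht.1,
    intervalIntegral.integral_const_mul, integral_rpow (Or.inl (by linarith)),
    zero_rpow (by linarith), neg_add_eq_sub, sub_zero, ← mul_div_assoc, ← rpow_add ha]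
  simp

lemma intervalIntegrable_exp_mul_posLog_div (hε : ε < 1) (ha : 0 ≤ a) (hab : a ≤ b) :
    IntervalIntegrable (fun t => exp (ε * log⁺ (a / t))) volume 0 b :=
  intervalIntegrable_comp_posLog_div (fun s => exp (ε * s)) ha hab
    (intervalIntegrable_exp_mul_log_sub hε ha)

lemma integral_exp_mul_posLog_div (hε : ε < 1) (ha : 0 ≤ a) (hab : a ≤ b) :
    ∫ t in 0..b, exp (ε * log⁺ (a / t)) = a / (1 - ε) + (b - a) := by
  rw [integral_comp_posLog_div (fun s => exp (ε * s)) ha hab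
    (intervalIntegrable_exp_mul_log_sub hε ha), integral_exp_mul_log_sub hε ha]
  simp

end Integrals

/-- For every point of `Ω_ε` (with `0 < ε < 1`) there is an extremal function
in `BMO_ε((0,1])` attaining the value `B⁺_ε(x)`; in particular the Bellman
supremum is at least `B⁺_ε(x)`. -/
theorem stmt6 (ε : ℝ) (hε0 : 0 < ε) (hε1 : ε < 1) (x : ℝ × ℝ) (hx : x ∈ Omega ε) :
    ∃ φ : ℝ → ℝ, BMOe ε 0 1 φ ∧
      (∫ t in (0:ℝ)..1, φ t) = x.1 ∧
      (∫ t in (0:ℝ)..1, (φ t) ^ 2) = x.2 ∧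
      IntervalIntegrable (fun t => Real.exp (φ t)) volume 0 1 ∧
      (∫ t in (0:ℝ)..1, Real.exp (φ t)) = Bp ε x := by
  obtain ⟨hx₁, hx₂⟩ := hx
  set u := √(ε ^ 2 + x.1 ^ 2 - x.2) with hu
  have hu_sq : u ^ 2 = ε ^ 2 + x.1 ^ 2 - x.2 := sq_sqrt (by linarith)
  have hu_le : u ≤ ε := sqrt_le_iff.mpr ⟨hε0.le, by linarith⟩
  obtain ⟨a, hεa, ha0, ha1⟩ : ∃ a, ε * a = ε - u ∧ 0 ≤ a ∧ a ≤ 1 :=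
    ⟨1 - u / ε, by field_simp, by rw [sub_nonneg, div_le_one hε0]; exact hu_le,
      by linarith [div_nonneg (sqrt_nonneg _ : 0 ≤ u) hε0.le]⟩
  have hψ := intervalIntegrable_posLog_div a 0 1
  have hψ2 := intervalIntegrable_posLog_div_sq a le_rfl zero_le_one
  refine ⟨fun t => (x.1 - ε * a) + ε * log⁺ (a / t),
    ⟨intervalIntegrable_const.add (hψ.const_mul ε),
      intervalIntegrable_sq_const_add_mul _ _ hψ hψ2, fun c d hc hcd _ => ?_⟩, ?_, ?_, ?_, ?_⟩
  · calc _ = ε ^ 2 * meanOsc (fun t => log⁺ (a / t)) c d :=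
          meanOsc_const_add_mul _ _ hcd.ne (intervalIntegrable_posLog_div a c d)
            (intervalIntegrable_posLog_div_sq a hc (hc.trans hcd.le))
      _ ≤ ε ^ 2 := mul_le_of_le_one_right (sq_nonneg ε) (meanOsc_posLog_div_le_one a hc hcd)
  · rw [integral_const_add_mul _ _ hψ, integral_posLog_div ha0 ha1]
    ring
  · rw [integral_sq_const_add_mul _ _ hψ hψ2, integral_posLog_div ha0 ha1,
      integral_posLog_div_sq ha0 ha1]
    linear_combination (-1 : ℝ) * hu_sq + (u + ε - ε * a) * hεa
  · simp only [exp_add]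
    exact (intervalIntegrable_exp_mul_posLog_div hε1 ha0 ha1).const_mul _
  · simp only [exp_add]
    rw [intervalIntegral.integral_const_mul, integral_exp_mul_posLog_div hε1 ha0 ha1, Bp, ← hu,
      show x.1 - ε * a = x.1 + u - ε by linarith]
    have h1ε : 1 - ε ≠ 0 := by linarith
    field_simp
    linear_combination hεa
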